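/- Let x₀ be a CMESP-feasible binary vector with det C[S(x₀), S(x₀)] > 0, and set LB := log det C[S(x₀), S(x₀)]. Let (Θ̂, υ̂, ν̂, π̂, τ̂) be a DFact-feasible tuple for (C, s, A, b; F) with objective value ζ̂ := f(Θ̂, ν̂, π̂, τ̂). Let x* be an optimal solution of CMESP, i.e., a CMESP-feasible binary vector such that det C[S(x), S(x)] ≤ det C[S(x*), S(x*)] for every CMESP-feasible binary vector x. Then for every index j ∈ {1,…,n}: if ζ̂ − LB < υ̂_j then x*_j = 0, and if ζ̂ − LB < ν̂_j then x*_j = 1. -/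

import Mathlib

open Matrix

/-- The eigenvalues of a real symmetric matrix, sorted in nonincreasing order:
`sortedEigs M 0` is the largest eigenvalue (`λ_1`) and `sortedEigs M (k-1)` the
smallest (`λ_k`).  For non-Hermitian matrices we return the junk value `0`. -/
noncomputable def sortedEigs {k : ℕ} (M : Matrix (Fin k) (Fin k) ℝ) : Fin k → ℝ :=
  if h : M.IsHermitian then fun i => (h.eigenvalues ∘ Tuple.sort h.eigenvalues) i.rev
  else fun _ => 0

/-- DFact-feasibility of the tuple `(Θ, υ, ν, π, τ)` for the data `(A; F)`:
`Θ ≻ 0`, `υ, ν, π ≥ 0` and `diag(FΘFᵀ) + υ − ν − Aᵀπ − τ𝟙 = 0`. -/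
def DFactFeasible {n m k : ℕ} (A : Matrix (Fin m) (Fin n) ℝ) (F : Matrix (Fin n) (Fin k) ℝ)
    (Θ : Matrix (Fin k) (Fin k) ℝ) (υ ν : Fin n → ℝ) (π : Fin m → ℝ) (τ : ℝ) : Prop :=
  Θ.PosDef ∧ (∀ j, 0 ≤ υ j) ∧ (∀ j, 0 ≤ ν j) ∧ (∀ i, 0 ≤ π i) ∧
    ∀ j, (F * Θ * Fᵀ) j j + υ j - ν j - (∑ i, A i j * π i) - τ = 0

/-- The DFact objective value
`f(Θ, ν, π, τ) = −Σ_{ℓ=k−s+1}^{k} log λ_ℓ(Θ) + νᵀ𝟙 + πᵀb + τ·s − s`. -/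
noncomputable def DFactObj {n m k : ℕ} (s : ℕ) (b : Fin m → ℝ)
    (Θ : Matrix (Fin k) (Fin k) ℝ) (ν : Fin n → ℝ) (π : Fin m → ℝ) (τ : ℝ) : ℝ :=
  -(∑ i : Fin k, if k - s ≤ (i : ℕ) then Real.log (sortedEigs Θ i) else 0)
    + (∑ j, ν j) + (∑ i, π i * b i) + τ * s - s


/-- CMESP-feasibility of a binary vector `x`: `x ∈ {0,1}ⁿ`, `𝟙ᵀx = s` and `Ax ≤ b`. -/
def CMESPFeasible {n m : ℕ} (s : ℕ) (A : Matrix (Fin m) (Fin n) ℝ) (b : Fin m → ℝ)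
    (x : Fin n → ℝ) : Prop :=
  (∀ j, x j = 0 ∨ x j = 1) ∧ (∑ j, x j = (s : ℝ)) ∧ ∀ i, A.mulVec x i ≤ b i

/-- `det C[S(x), S(x)]`: the determinant of the principal submatrix of `C` whose rows and
columns are indexed by the support `S(x) = {j : x j = 1}` of a binary vector `x`. -/
noncomputable def suppDet {n : ℕ} (C : Matrix (Fin n) (Fin n) ℝ) (x : Fin n → ℝ) : ℝ :=
  haveI : DecidablePred (fun j : Fin n => x j = 1) := Classical.decPred _
  (C.submatrix (fun i : {j : Fin n // x j = 1} => (i : Fin n))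
    (fun i : {j : Fin n // x j = 1} => (i : Fin n))).det

open Finset in
lemma det_expand {s k : ℕ} (H : Matrix (Fin s) (Fin k) ℝ) (w : Fin k → ℝ) :
    (H * Matrix.diagonal w * Hᵀ).det
      = ∑ f : Fin s → Fin k, (∏ r, w (f r)) *
          ((∏ r, H r (f r)) * (Matrix.of fun r c => H c (f r)).det) := by
  set D := (Matrix.detRowAlternating : (Fin s → ℝ) [⋀^Fin s]→ₗ[ℝ] ℝ).toMultilinearMap with hD
  have hrow : (H * Matrix.diagonal w * Hᵀ) =
      fun r => ∑ i : Fin k, (w i * H r i) • (fun c => H c i) := by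
    funext r c
    simp only [Finset.sum_apply, Pi.smul_apply, smul_eq_mul, Matrix.mul_apply,
      Matrix.diagonal_apply, Matrix.transpose_apply, ite_mul, zero_mul, mul_ite, mul_zero,
      Finset.sum_ite_eq, Finset.sum_ite_eq', Finset.mem_univ, if_true]
    refine Finset.sum_congr rfl fun i _ => by ring
  have h1 : (H * Matrix.diagonal w * Hᵀ).det
      = D (fun r => ∑ i : Fin k, (w i * H r i) • (fun c => H c i)) := by
    rw [← hrow]; rfl
  rw [h1, MultilinearMap.map_sum]
  refine Finset.sum_congr rfl fun f _ => ?_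
  have h2 : D (fun r => (w (f r) * H r (f r)) • (fun c => H c (f r)))
      = D (fun r => (w (f r) * H r (f r)) • (Matrix.of fun r c => H c (f r)) r) := rfl
  erw [h2, MultilinearMap.map_smul_univ]
  have h3 : D (Matrix.of fun r c => H c (f r)) = (Matrix.of fun r c => H c (f r)).det := rfl
  rw [h3]
  simp only [smul_eq_mul, Finset.prod_mul_distrib]
  ring

lemma fiber_sq {s k : ℕ} (H : Matrix (Fin s) (Fin k) ℝ) (S : Finset (Fin k)) (hS : S.card = s) :
    ∑ f ∈ (Finset.univ.filter
        (fun f : Fin s → Fin k => Function.Injective f ∧ Finset.univ.image f = S)),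
      ((∏ r, H r (f r)) * (Matrix.of fun r c => H c (f r)).det)
    = ((Matrix.of fun r c => H c (S.orderEmbOfFin hS r)).det) ^ 2 := by
  classical
  set e := S.orderEmbOfFin hS with he
  set Q : Matrix (Fin s) (Fin s) ℝ := Matrix.of fun r c => H c (e r) with hQ
  set A := (Finset.univ.filter
        (fun f : Fin s → Fin k => Function.Injective f ∧ Finset.univ.image f = S)) with hA
  have hmemS : ∀ f ∈ A, ∀ r, f r ∈ S := by
    intro f hf r
    rw [hA, Finset.mem_filter] at hf
    rw [← hf.2.2]
    exact Finset.mem_image_of_mem f (Finset.mem_univ r)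
  have hiso : ∀ (x : Fin k) (hx : x ∈ S), e ((S.orderIsoOfFin hS).symm ⟨x, hx⟩) = x := by
    intro x hx
    rw [he, ← Finset.coe_orderIsoOfFin_apply, OrderIso.apply_symm_apply]
  set toPerm : ∀ f ∈ A, Equiv.Perm (Fin s) := fun f hf => Equiv.ofBijective
      (fun r => (S.orderIsoOfFin hS).symm ⟨f r, hmemS f hf r⟩)
      (Finite.injective_iff_bijective.mp (fun r1 r2 h12 => by
        have h3 := congrArg (fun z => ((S.orderIsoOfFin hS) z : Fin k)) h12
        simp only [OrderIso.apply_symm_apply] at h3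
        exact (Finset.mem_filter.mp hf).2.1 h3)) with htoPerm
  have hcomp : ∀ f (hf : f ∈ A) (r : Fin s), e (toPerm f hf r) = f r := by
    intro f hf r
    rw [htoPerm]
    exact hiso (f r) (hmemS f hf r)
  have hjmem : ∀ σ : Equiv.Perm (Fin s), (fun r => e (σ r)) ∈ A := by
    intro σ
    rw [hA, Finset.mem_filter]
    refine ⟨Finset.mem_univ _, fun r1 r2 h => σ.injective (e.injective h), ?_⟩
    ext x
    simp only [Finset.mem_image, Finset.mem_univ, true_and]
    constructor
    · rintro ⟨r, rfl⟩; exact Finset.orderEmbOfFin_mem S hS (σ r)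
    · intro hx
      exact ⟨σ.symm ((S.orderIsoOfFin hS).symm ⟨x, hx⟩), by
        rw [Equiv.apply_symm_apply]; exact hiso x hx⟩
  have step : ∑ f ∈ A, ((∏ r, H r (f r)) * (Matrix.of fun r c => H c (f r)).det)
      = ∑ σ : Equiv.Perm (Fin s),
        ((∏ r, H r (e (σ r))) * (Matrix.of fun r c => H c (e (σ r))).det) := by
    refine Finset.sum_bij' toPerm (fun σ _ => (fun r => e (σ r))) ?_ ?_ ?_ ?_ ?_
    · intro a ha; exact Finset.mem_univ _
    · intro σ _; exact hjmem σ
    · intro f hf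
      funext r
      exact hcomp f hf r
    · intro σ _
      refine Equiv.ext fun r => e.injective ?_
      exact hcomp _ (hjmem σ) r
    · intro f hf
      simp only [hcomp f hf]
  rw [step]
  have key : ∀ σ : Equiv.Perm (Fin s),
      (∏ r, H r (e (σ r))) * (Matrix.of fun r c => H c (e (σ r))).det
      = (((Equiv.Perm.sign σ : ℤ) : ℝ) * (∏ i, Q (σ i) i)) * Q.det := by
    intro σ
    have h1 : (Matrix.of fun r c => H c (e (σ r))) = Q.submatrix σ id := rfl
    have h2 : ∀ r, H r (e (σ r)) = Q (σ r) r := fun r => rfl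
    rw [h1, Matrix.det_permute]
    simp only [h2]
    push_cast
    ring
  simp only [key]
  rw [← Finset.sum_mul]
  rw [show ∑ σ : Equiv.Perm (Fin s), (((Equiv.Perm.sign σ : ℤ) : ℝ) * ∏ i, Q (σ i) i) = Q.det by
    rw [Matrix.det_apply]
    refine Finset.sum_congr rfl fun σ _ => ?_
    rw [Units.smul_def, zsmul_eq_mul]]
  ring

lemma cb_ineq {s k : ℕ} (H : Matrix (Fin s) (Fin k) ℝ) (d : Fin k → ℝ) (c₀ : ℝ)
    (hc₀ : 0 ≤ c₀) (hd : ∀ S : Finset (Fin k), S.card = s → c₀ ≤ ∏ i ∈ S, d i) :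
    c₀ * (H * Hᵀ).det ≤ (H * Matrix.diagonal d * Hᵀ).det := by
  classical
  set T : (Fin k → ℝ) → (Fin s → Fin k) → ℝ := fun w f =>
    (∏ r, w (f r)) * ((∏ r, H r (f r)) * (Matrix.of fun r c => H c (f r)).det) with hT
  -- kill non-injective terms
  have hzero : ∀ w : Fin k → ℝ, ∀ f : Fin s → Fin k, ¬ Function.Injective f → T w f = 0 := by
    intro w f hf
    rw [Function.not_injective_iff] at hf
    obtain ⟨r1, r2, h12, hne⟩ := hf
    have : (Matrix.of fun r c => H c (f r)).det = 0 := by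
      apply Matrix.det_zero_of_row_eq hne
      funext c
      simp [h12]
    rw [hT]; simp [this]
  have hres : ∀ w : Fin k → ℝ,
      ∑ f : Fin s → Fin k, T w f
        = ∑ f ∈ Finset.univ.filter (fun f : Fin s → Fin k => Function.Injective f), T w f := by
    intro w
    rw [Finset.sum_filter_of_ne]
    intro f _ hne
    by_contra hinj
    exact hne (hzero w f hinj)
  have hmaps : ∀ f ∈ Finset.univ.filter (fun f : Fin s → Fin k => Function.Injective f),
      Finset.univ.image f ∈ Finset.univ.powersetCard s := by
    intro f hf
    rw [Finset.mem_filter] at hf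
    rw [Finset.mem_powersetCard]
    exact ⟨Finset.subset_univ _, by rw [Finset.card_image_of_injective _ hf.2]; simp⟩
  have hfib : ∀ w : Fin k → ℝ,
      ∑ f : Fin s → Fin k, T w f
        = ∑ S ∈ Finset.univ.powersetCard s,
            ∑ f ∈ (Finset.univ.filter
              (fun f : Fin s → Fin k => Function.Injective f ∧ Finset.univ.image f = S)),
              T w f := by
    intro w
    rw [hres w, ← Finset.sum_fiberwise_of_maps_to hmaps]
    refine Finset.sum_congr rfl fun S _ => ?_
    rw [Finset.filter_filter]
  -- rewrite the two determinants
  have hdetd : (H * Matrix.diagonal d * Hᵀ).det = ∑ f : Fin s → Fin k, T d f := det_expand H d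
  have hdet1 : (H * Matrix.diagonal (1 : Fin k → ℝ) * Hᵀ).det = ∑ f : Fin s → Fin k, T 1 f :=
    det_expand H 1
  have h1 : H * Matrix.diagonal (1 : Fin k → ℝ) * Hᵀ = H * Hᵀ := by
    rw [show Matrix.diagonal (1 : Fin k → ℝ) = (1 : Matrix (Fin k) (Fin k) ℝ) from
      Matrix.diagonal_one, Matrix.mul_one]
  rw [← h1]
  rw [hdetd, hdet1, hfib d, hfib 1, Finset.mul_sum]
  refine Finset.sum_le_sum fun S hS => ?_
  rw [Finset.mem_powersetCard] at hS
  have hScard : S.card = s := hS.2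
  have hconst : ∀ f ∈ (Finset.univ.filter
      (fun f : Fin s → Fin k => Function.Injective f ∧ Finset.univ.image f = S)),
      T d f = (∏ i ∈ S, d i) *
        ((∏ r, H r (f r)) * (Matrix.of fun r c => H c (f r)).det) := by
    intro f hf
    rw [Finset.mem_filter] at hf
    have : ∏ r, d (f r) = ∏ i ∈ S, d i := by
      rw [← hf.2.2, Finset.prod_image (fun x _ y _ h => hf.2.1 h)]
    rw [hT]; dsimp only; rw [this]
  have hconst1 : ∀ f ∈ (Finset.univ.filter
      (fun f : Fin s → Fin k => Function.Injective f ∧ Finset.univ.image f = S)),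
      T 1 f = ((∏ r, H r (f r)) * (Matrix.of fun r c => H c (f r)).det) := by
    intro f _
    rw [hT]; simp
  rw [Finset.sum_congr rfl hconst, Finset.sum_congr rfl hconst1, ← Finset.mul_sum,
    fiber_sq H S hScard]
  exact mul_le_mul_of_nonneg_right (hd S hScard) (sq_nonneg _)

lemma le_emb {s k : ℕ} (e : Fin s ↪o Fin k) : ∀ r : Fin s, (r : ℕ) ≤ (e r : ℕ) := by
  intro r
  induction' hr : (r : ℕ) with j ih generalizing r
  · exact Nat.zero_le _
  · have hj : j < s := by omega
    have h1 : (⟨j, hj⟩ : Fin s) < r := by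
      rw [Fin.lt_def]; simp only [Fin.val_mk]; omega
    have h2 := e.strictMono h1
    have h3 := ih ⟨j, hj⟩ rfl
    rw [Fin.lt_def] at h2
    omega

lemma prod_smallest_le {k s : ℕ} (hsk : s ≤ k) (g : Fin k → ℝ) (hg : Monotone g)
    (hpos : ∀ i, 0 < g i) (T : Finset (Fin k)) (hT : T.card = s) :
    ∏ r : Fin s, g (Fin.castLE hsk r) ≤ ∏ i ∈ T, g i := by
  classical
  set e := T.orderEmbOfFin hT with he
  have himg : Finset.univ.image (fun r => e r) = T := by
    ext x
    simp only [Finset.mem_image, Finset.mem_univ, true_and]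
    constructor
    · rintro ⟨r, rfl⟩; exact Finset.orderEmbOfFin_mem T hT r
    · intro hx
      have := (Set.ext_iff.mp (Finset.range_orderEmbOfFin T hT) x).mpr (by exact_mod_cast hx)
      obtain ⟨r, hr⟩ := this
      exact ⟨r, hr⟩
  rw [← himg, Finset.prod_image (fun x _ y _ h => e.injective h)]
  refine Finset.prod_le_prod (fun r _ => (hpos _).le) (fun r _ => ?_)
  apply hg
  rw [Fin.le_def]
  simpa using le_emb e r

open Finset in
lemma weak_duality {n m s k : ℕ} (hs : 0 < s) (hsk : s ≤ k)
    (C : Matrix (Fin n) (Fin n) ℝ) (F : Matrix (Fin n) (Fin k) ℝ) (hCF : C = F * Fᵀ)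
    (A : Matrix (Fin m) (Fin n) ℝ) (b : Fin m → ℝ)
    (Θ : Matrix (Fin k) (Fin k) ℝ) (υ ν : Fin n → ℝ) (π : Fin m → ℝ) (τ : ℝ)
    (hfeas : DFactFeasible A F Θ υ ν π τ)
    (x : Fin n → ℝ) (hx : CMESPFeasible s A b x) (hdet : 0 < suppDet C x) :
    Real.log (suppDet C x) + (∑ j, υ j * x j) + (∑ j, ν j * (1 - x j))
      ≤ DFactObj s b Θ ν π τ := by
  classical
  obtain ⟨hΘpd, hυ, hν, hπ, heq⟩ := hfeas
  obtain ⟨hbin, hsum, hAx⟩ := hx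
  have hΘ : Θ.IsHermitian := hΘpd.1
  set dEig : Fin k → ℝ := hΘ.eigenvalues with hdEig
  have hdpos : ∀ i, 0 < dEig i := fun i => hΘpd.eigenvalues_pos i
  -- support cardinality
  have hxnn : ∀ j, 0 ≤ x j := fun j => by rcases hbin j with h | h <;> simp [h]
  have hcard : Fintype.card {j : Fin n // x j = 1} = s := by
    have h1 : (∑ j, x j) = ∑ j ∈ Finset.univ.filter (fun j => x j = 1), x j := by
      rw [Finset.sum_filter]
      refine Finset.sum_congr rfl fun j _ => ?_
      rcases hbin j with h | h <;> simp [h]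
    have h2 : ∑ j ∈ Finset.univ.filter (fun j => x j = 1), x j
        = (Finset.univ.filter (fun j => x j = 1)).card := by
      rw [Finset.sum_congr rfl (fun j hj => (Finset.mem_filter.mp hj).2)]
      simp
    rw [Fintype.card_subtype]
    have : ((Finset.univ.filter (fun j => x j = 1)).card : ℝ) = (s : ℝ) := by
      rw [← h2, ← h1, hsum]
    exact_mod_cast this
  set eqv : {j : Fin n // x j = 1} ≃ Fin s := Fintype.equivFinOfCardEq hcard with heqv
  set ρ : Fin s → Fin n := fun r => ((eqv.symm r : {j : Fin n // x j = 1}) : Fin n) with hρ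
  have hρx : ∀ r, x (ρ r) = 1 := fun r => (eqv.symm r).2
  have hρinj : Function.Injective ρ := fun r1 r2 h =>
    eqv.symm.injective (Subtype.ext h)
  set G : Matrix (Fin s) (Fin k) ℝ := F.submatrix ρ id with hG
  -- suppDet = det (G * Gᵀ)
  have hsupp : suppDet C x = (G * Gᵀ).det := by
    have h1 : suppDet C x = (C.submatrix (fun i : {j : Fin n // x j = 1} => (i : Fin n))
        (fun i : {j : Fin n // x j = 1} => (i : Fin n))).det := rfl
    have h2 : C.submatrix ρ ρ = (C.submatrix (fun i : {j : Fin n // x j = 1} => (i : Fin n))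
        (fun i : {j : Fin n // x j = 1} => (i : Fin n))).submatrix eqv.symm eqv.symm := rfl
    have h3 : (C.submatrix ρ ρ).det = suppDet C x := by
      rw [h1, h2, Matrix.det_submatrix_equiv_self]
    rw [← h3]
    congr 1
    ext r1 r2
    simp [hCF, Matrix.mul_apply, hG]
  -- spectral theorem
  set U : Matrix (Fin k) (Fin k) ℝ := (hΘ.eigenvectorUnitary : Matrix (Fin k) (Fin k) ℝ)
    with hU
  have hUU : U * Uᵀ = 1 := by
    have := (Matrix.mem_unitaryGroup_iff).mp hΘ.eigenvectorUnitary.2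
    rwa [Matrix.star_eq_conjTranspose, Matrix.conjTranspose_eq_transpose_of_trivial] at this
  have hUU' : Uᵀ * U = 1 := by
    have := (Matrix.mem_unitaryGroup_iff').mp hΘ.eigenvectorUnitary.2
    rwa [Matrix.star_eq_conjTranspose, Matrix.conjTranspose_eq_transpose_of_trivial] at this
  have hSpec : Θ = U * Matrix.diagonal dEig * Uᵀ := by
    have h := hΘ.spectral_theorem
    rwa [Unitary.conjStarAlgAut_apply, Matrix.star_eq_conjTranspose, Matrix.conjTranspose_eq_transpose_of_trivial,
      RCLike.ofReal_real_eq_id, Function.id_comp] at h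
  set Hm : Matrix (Fin s) (Fin k) ℝ := G * U with hHm
  have hGθ : G * Θ * Gᵀ = Hm * Matrix.diagonal dEig * Hmᵀ := by
    rw [hHm, hSpec, Matrix.transpose_mul]
    simp only [Matrix.mul_assoc]
  have hGG : G * Gᵀ = Hm * Hmᵀ := by
    rw [hHm, Matrix.transpose_mul, ← Matrix.mul_assoc, Matrix.mul_assoc G U, hUU,
      Matrix.mul_one]
  -- sorted eigenvalues and c₀
  set σp := Tuple.sort dEig with hσp
  set gS : Fin k → ℝ := dEig ∘ σp with hgS
  have hgSmono : Monotone gS := Tuple.monotone_sort dEig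
  have hgSpos : ∀ i, 0 < gS i := fun i => hdpos _
  set c₀ : ℝ := ∏ r : Fin s, gS (Fin.castLE hsk r) with hc₀
  have hc₀pos : 0 < c₀ := Finset.prod_pos fun r _ => hgSpos _
  have hd : ∀ S : Finset (Fin k), S.card = s → c₀ ≤ ∏ i ∈ S, dEig i := by
    intro S hS
    have h1 : ∏ i ∈ S.image σp.symm, gS i = ∏ i ∈ S, dEig i := by
      rw [Finset.prod_image (fun a _ b _ h => σp.symm.injective h)]
      refine Finset.prod_congr rfl fun i _ => ?_
      simp [hgS]
    rw [← h1]
    exact prod_smallest_le hsk gS hgSmono hgSpos _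
      (by rw [Finset.card_image_of_injective _ σp.symm.injective, hS])
  -- Cauchy–Binet bound
  have hcb : c₀ * (G * Gᵀ).det ≤ (G * Θ * Gᵀ).det := by
    rw [hGθ, hGG]
    exact cb_ineq Hm dEig c₀ hc₀pos.le hd
  -- B := G * Θ * Gᵀ
  set B : Matrix (Fin s) (Fin s) ℝ := G * Θ * Gᵀ with hB
  have hBpsd : B.PosSemidef := by
    have h := hΘpd.posSemidef.mul_mul_conjTranspose_same G
    rwa [Matrix.conjTranspose_eq_transpose_of_trivial] at h
  have hBherm : B.IsHermitian := hBpsd.isHermitian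
  have hdetB : 0 < B.det := lt_of_lt_of_le (mul_pos hc₀pos (hsupp ▸ hdet)) hcb
  -- eigenvalues of B
  set μ : Fin s → ℝ := hBherm.eigenvalues with hμ
  have hμnn : ∀ i, 0 ≤ μ i := fun i => hBpsd.eigenvalues_nonneg i
  have hdetμ : B.det = ∏ i, μ i := by
    have := hBherm.det_eq_prod_eigenvalues
    simpa using this
  have hμpos : ∀ i, 0 < μ i := by
    intro i
    rcases lt_or_eq_of_le (hμnn i) with h | h
    · exact h
    · exfalso
      rw [hdetμ] at hdetB
      exact absurd (Finset.prod_eq_zero (Finset.mem_univ i) h.symm) (by positivity)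
  have htrB : B.trace = ∑ i, μ i := by
    have hBspec := hBherm.spectral_theorem
    rw [Unitary.conjStarAlgAut_apply, Matrix.star_eq_conjTranspose, Matrix.conjTranspose_eq_transpose_of_trivial,
      RCLike.ofReal_real_eq_id, Function.id_comp] at hBspec
    have hU2 : ((hBherm.eigenvectorUnitary : Matrix (Fin s) (Fin s) ℝ))ᵀ
        * (hBherm.eigenvectorUnitary : Matrix (Fin s) (Fin s) ℝ) = 1 := by
      have := (Matrix.mem_unitaryGroup_iff').mp hBherm.eigenvectorUnitary.2
      rwa [Matrix.star_eq_conjTranspose, Matrix.conjTranspose_eq_transpose_of_trivial] at this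
    rw [hBspec, Matrix.trace_mul_cycle, hU2, Matrix.one_mul, Matrix.trace_diagonal]
  -- log det B ≤ trace B - s
  have hlogdet : Real.log B.det ≤ B.trace - s := by
    rw [hdetμ, htrB, Real.log_prod (fun i _ => (hμpos i).ne')]
    have : ∀ i ∈ (Finset.univ : Finset (Fin s)), Real.log (μ i) ≤ μ i - 1 :=
      fun i _ => Real.log_le_sub_one_of_pos (hμpos i)
    calc ∑ i, Real.log (μ i) ≤ ∑ i : Fin s, (μ i - 1) := Finset.sum_le_sum this
      _ = ∑ i, μ i - s := by rw [Finset.sum_sub_distrib]; simp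
  -- trace B in terms of the feasibility constraint
  have hBsub : B = (F * Θ * Fᵀ).submatrix ρ ρ := by
    rw [hB, hG]
    ext r1 r2
    simp [Matrix.mul_apply, Finset.sum_mul]
  have htr2 : B.trace = ∑ j, x j * (F * Θ * Fᵀ) j j := by
    rw [hBsub]
    have h1 : Matrix.trace ((F * Θ * Fᵀ).submatrix ρ ρ) = ∑ r : Fin s, (F * Θ * Fᵀ) (ρ r) (ρ r) :=
      rfl
    rw [h1]
    have h2 : ∑ r : Fin s, (F * Θ * Fᵀ) (ρ r) (ρ r)
        = ∑ p : {j : Fin n // x j = 1}, (F * Θ * Fᵀ) (p : Fin n) (p : Fin n) :=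
      Equiv.sum_comp eqv.symm (fun p : {j : Fin n // x j = 1} => (F * Θ * Fᵀ) (p : Fin n) (p : Fin n))
    have h3 : ∑ p : {j : Fin n // x j = 1}, (F * Θ * Fᵀ) (p : Fin n) (p : Fin n)
        = ∑ j ∈ Finset.univ.filter (fun j => x j = 1), (F * Θ * Fᵀ) j j :=
      (Finset.sum_subtype (Finset.univ.filter (fun j => x j = 1)) (fun j => by simp)
        (fun j => (F * Θ * Fᵀ) j j)).symm
    rw [h2, h3, Finset.sum_filter]
    refine Finset.sum_congr rfl fun j _ => ?_
    rcases hbin j with h | h <;> simp [h]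
  -- feasibility constraint: diag entries
  have hdiag : ∀ j, (F * Θ * Fᵀ) j j = ν j - υ j + (∑ i, A i j * π i) + τ := by
    intro j
    have := heq j
    linarith
  have htr3 : B.trace ≤ (∑ j, ν j * x j) - (∑ j, υ j * x j) + (∑ i, π i * b i) + τ * s := by
    rw [htr2]
    have hexp : ∀ j, x j * (F * Θ * Fᵀ) j j
        = ν j * x j - υ j * x j + (∑ i, A i j * π i) * x j + τ * x j := by
      intro j; rw [hdiag j]; ring
    rw [Finset.sum_congr rfl fun j _ => hexp j]
    rw [Finset.sum_add_distrib, Finset.sum_add_distrib, Finset.sum_sub_distrib]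
    have hAxb : ∑ j, (∑ i, A i j * π i) * x j ≤ ∑ i, π i * b i := by
      have hswap : ∑ j, (∑ i, A i j * π i) * x j = ∑ i, π i * (A.mulVec x i) := by
        simp_rw [Finset.sum_mul, Matrix.mulVec, dotProduct, Finset.mul_sum]
        rw [Finset.sum_comm]
        exact Finset.sum_congr rfl fun i _ => Finset.sum_congr rfl fun j _ => by ring
      rw [hswap]
      refine Finset.sum_le_sum fun i _ => ?_
      exact mul_le_mul_of_nonneg_left (hAx i) (hπ i)
    have hτ : ∑ j, τ * x j = τ * s := by
      rw [← Finset.mul_sum, hsum]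
    linarith
  -- the objective value
  have hsort : sortedEigs Θ = fun i => gS i.rev := by
    unfold sortedEigs
    rw [dif_pos hΘ]
  have hlogsum : (∑ i : Fin k, if k - s ≤ (i : ℕ) then Real.log (sortedEigs Θ i) else 0)
      = Real.log c₀ := by
    rw [hsort, hc₀, Real.log_prod (fun r _ => (hgSpos _).ne')]
    have h1 : ∑ i : Fin k, (if k - s ≤ (i : ℕ) then Real.log (gS i.rev) else 0)
        = ∑ i : Fin k, (if k - s ≤ ((Fin.rev i : Fin k) : ℕ) then Real.log (gS i) else 0) := by
      refine Fintype.sum_equiv (Fin.revPerm) _ _ (fun i => ?_)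
      simp [Fin.rev_rev]
    rw [h1]
    have h2 : ∀ i : Fin k, (k - s ≤ ((Fin.rev i : Fin k) : ℕ)) ↔ ((i : ℕ) < s) := by
      intro i
      rw [Fin.val_rev]
      have := i.2
      omega
    rw [Finset.sum_congr rfl fun i _ => by rw [if_congr (h2 i) rfl rfl]]
    rw [Finset.sum_ite, Finset.sum_const_zero, add_zero]
    refine (Finset.sum_bij' (i := fun (i : Fin k) (hi : i ∈ Finset.univ.filter
        (fun i : Fin k => (i : ℕ) < s)) => (⟨(i : ℕ), (Finset.mem_filter.mp hi).2⟩ : Fin s))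
      (j := fun (r : Fin s) _ => Fin.castLE hsk r) ?_ ?_ ?_ ?_ ?_)
    · intro i hi; exact Finset.mem_univ _
    · intro r _
      rw [Finset.mem_filter]
      exact ⟨Finset.mem_univ _, r.2⟩
    · intro i hi; rfl
    · intro r _; rfl
    · intro i hi; rfl
  have hObj : DFactObj s b Θ ν π τ
      = -Real.log c₀ + (∑ j, ν j) + (∑ i, π i * b i) + τ * s - s := by
    rw [DFactObj, hlogsum]
  -- final chain
  have hdetGG : 0 < (G * Gᵀ).det := hsupp ▸ hdet
  have hlog1 : Real.log c₀ + Real.log ((G * Gᵀ).det) ≤ Real.log B.det := by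
    rw [← Real.log_mul hc₀pos.ne' hdetGG.ne']
    exact Real.log_le_log (mul_pos hc₀pos hdetGG) hcb
  have hν1 : ∑ j, ν j * (1 - x j) = (∑ j, ν j) - ∑ j, ν j * x j := by
    rw [← Finset.sum_sub_distrib]
    exact Finset.sum_congr rfl fun j _ => by ring
  rw [hsupp, hObj, hν1]
  linarith [hlog1, hlogdet, htr3]

theorem stmt_6 {n m s k : ℕ} (hn : 0 < n) (hm : 0 < m) (hs : 0 < s) (hsk : s ≤ k)
    (C : Matrix (Fin n) (Fin n) ℝ) (hC : C.PosSemidef)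
    (F : Matrix (Fin n) (Fin k) ℝ) (hCF : C = F * Fᵀ)
    (A : Matrix (Fin m) (Fin n) ℝ) (b : Fin m → ℝ)
    -- a feasible solution of CMESP with positive determinant, giving the lower bound LB
    (x₀ : Fin n → ℝ) (hx₀ : CMESPFeasible s A b x₀) (hdet₀ : 0 < suppDet C x₀)
    -- a DFact-feasible tuple with objective value ζ̂
    (Θ : Matrix (Fin k) (Fin k) ℝ) (υ ν : Fin n → ℝ) (π : Fin m → ℝ) (τ : ℝ)
    (hfeas : DFactFeasible A F Θ υ ν π τ)
    -- an optimal solution x* of CMESP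
    (xstar : Fin n → ℝ) (hxstar : CMESPFeasible s A b xstar)
    (hopt : ∀ x : Fin n → ℝ, CMESPFeasible s A b x → suppDet C x ≤ suppDet C xstar)
    (j : Fin n) :
    (DFactObj s b Θ ν π τ - Real.log (suppDet C x₀) < υ j → xstar j = 0) ∧
    (DFactObj s b Θ ν π τ - Real.log (suppDet C x₀) < ν j → xstar j = 1) := by
  classical
  set ζ := DFactObj s b Θ ν π τ with hζ
  set LB := Real.log (suppDet C x₀) with hLB
  have hds : 0 < suppDet C xstar := lt_of_lt_of_le hdet₀ (hopt x₀ hx₀)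
  have hlog : LB ≤ Real.log (suppDet C xstar) :=
    Real.log_le_log hdet₀ (hopt x₀ hx₀)
  have hwd := weak_duality hs hsk C F hCF A b Θ υ ν π τ hfeas xstar hxstar hds
  obtain ⟨hbin, _, _⟩ := hxstar
  have hterm1 : ∀ j', 0 ≤ υ j' * xstar j' := by
    intro j'
    rcases hbin j' with h | h <;> simp [h, (hfeas.2.1 j')]
  have hterm2 : ∀ j', 0 ≤ ν j' * (1 - xstar j') := by
    intro j'
    rcases hbin j' with h | h <;> simp [h, (hfeas.2.2.1 j')]
  have hsum1 : υ j * xstar j ≤ ∑ j', υ j' * xstar j' :=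
    Finset.single_le_sum (fun j' _ => hterm1 j') (Finset.mem_univ j)
  have hsum2 : ν j * (1 - xstar j) ≤ ∑ j', ν j' * (1 - xstar j') :=
    Finset.single_le_sum (fun j' _ => hterm2 j') (Finset.mem_univ j)
  have hsumnn1 : 0 ≤ ∑ j', υ j' * xstar j' := Finset.sum_nonneg fun j' _ => hterm1 j'
  have hsumnn2 : 0 ≤ ∑ j', ν j' * (1 - xstar j') := Finset.sum_nonneg fun j' _ => hterm2 j'
  constructor
  · intro hlt
    rcases hbin j with h | h
    · exact h
    · exfalso
      have : υ j * xstar j ≤ ζ - LB := by linarith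
      rw [h, mul_one] at this
      linarith
  · intro hlt
    rcases hbin j with h | h
    · exfalso
      have : ν j * (1 - xstar j) ≤ ζ - LB := by linarith
      rw [h, sub_zero, mul_one] at this
      linarith
    · exact h
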